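/- Let θ ∈ L²([0,2π]) satisfy ∫₀^{2π} cos(θ(s)) ds = 0 and ∫₀^{2π} sin(θ(s)) ds = 0. If there exists (a₁,a₂,a₃) ∈ ℝ³ with (a₁,a₂,a₃) ≠ (0,0,0) such that a₁ cos(θ(s)) + a₂ sin(θ(s)) + a₃ = 0 for almost every s ∈ [0,2π], then θ ∈ Z. Equivalently, for every θ in M \ Z, the three functions s ↦ 1, s ↦ cos(θ(s)), s ↦ sin(θ(s)) are linearly independent in L²([0,2π]) (these are the gradients of the constraints defining M, so M \ Z is a smooth submanifold of codimension 3 of L²). -/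

import Mathlib

/-!
Write `a₁ cos x + a₂ sin x = r cos (x - φ)` with `r > 0` (if `a₁ = a₂ = 0` the relation forces
`a₃ = 0`). The relation then says that `cos (θ - φ)` is a.e. a constant; its integral is a linear
combination of `∫ cos θ` and `∫ sin θ`, hence zero, so the constant is `0` and
`θ ∈ φ + π/2 + πℤ` a.e. On that set `sin (θ - φ) = (-1)^k`, whose integral vanishes for the same
reason, so `{k even}` and `{k odd}` have equal measure, `π` each.
-/

open MeasureTheory Set Filter
open scoped Topology ENNReal

noncomputable section

/-- The measure `ds` on `[0, 2π]`. -/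
def μArc : Measure ℝ := volume.restrict (Set.Icc 0 (2 * Real.pi))

open Real

theorem exists_pos_mul_cos_sub_eq {a₁ a₂ : ℝ} (h : ¬(a₁ = 0 ∧ a₂ = 0)) :
    ∃ r φ : ℝ, 0 < r ∧ ∀ x, a₁ * cos x + a₂ * sin x = r * cos (x - φ) := by
  set z : ℂ := ⟨a₁, a₂⟩
  have hz : z ≠ 0 := fun hz => h ⟨congrArg Complex.re hz, congrArg Complex.im hz⟩
  refine ⟨‖z‖, z.arg, norm_pos_iff.mpr hz, fun x => ?_⟩
  have hre : ‖z‖ * cos z.arg = a₁ := Complex.norm_mul_cos_arg z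
  have him : ‖z‖ * sin z.arg = a₂ := Complex.norm_mul_sin_arg z
  rw [cos_sub]
  linear_combination (-cos x) * hre - sin x * him

namespace MeasureTheory

variable {α : Type*} [MeasurableSpace α] {μ : Measure α}

section Trigonometric

variable [IsFiniteMeasure μ] {θ : α → ℝ}

theorem integrable_cos_comp (hθ : AEStronglyMeasurable θ μ) :
    Integrable (fun s => cos (θ s)) μ :=
  (integrable_const 1).mono' (continuous_cos.comp_aestronglyMeasurable hθ)
    (ae_of_all _ fun _ => abs_cos_le_one _)

theorem integrable_sin_comp (hθ : AEStronglyMeasurable θ μ) :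
    Integrable (fun s => sin (θ s)) μ :=
  (integrable_const 1).mono' (continuous_sin.comp_aestronglyMeasurable hθ)
    (ae_of_all _ fun _ => abs_sin_le_one _)

theorem integral_cos_sub (hθ : AEStronglyMeasurable θ μ) (φ : ℝ) :
    ∫ s, cos (θ s - φ) ∂μ = cos φ * ∫ s, cos (θ s) ∂μ + sin φ * ∫ s, sin (θ s) ∂μ := by
  simp_rw [cos_sub, mul_comm (cos (θ _)), mul_comm (sin (θ _))]
  rw [integral_add ((integrable_cos_comp hθ).const_mul _) ((integrable_sin_comp hθ).const_mul _),
    integral_const_mul, integral_const_mul]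

theorem integral_sin_sub (hθ : AEStronglyMeasurable θ μ) (φ : ℝ) :
    ∫ s, sin (θ s - φ) ∂μ = cos φ * ∫ s, sin (θ s) ∂μ - sin φ * ∫ s, cos (θ s) ∂μ := by
  simp_rw [sin_sub, mul_comm (sin (θ _)), mul_comm (cos (θ _))]
  rw [integral_sub ((integrable_sin_comp hθ).const_mul _) ((integrable_cos_comp hθ).const_mul _),
    integral_const_mul, integral_const_mul]

theorem exists_ae_cos_sub_eq_zero [NeZero μ] (hθ : AEStronglyMeasurable θ μ)
    (hcos : ∫ s, cos (θ s) ∂μ = 0) (hsin : ∫ s, sin (θ s) ∂μ = 0)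
    {a₁ a₂ a₃ : ℝ} (ha : ¬(a₁ = 0 ∧ a₂ = 0 ∧ a₃ = 0))
    (hrel : ∀ᵐ s ∂μ, a₁ * cos (θ s) + a₂ * sin (θ s) + a₃ = 0) :
    ∃ φ, ∀ᵐ s ∂μ, cos (θ s - φ) = 0 := by
  have h12 : ¬(a₁ = 0 ∧ a₂ = 0) := by
    rintro ⟨rfl, rfl⟩
    obtain ⟨s, hs⟩ := hrel.exists
    exact ha ⟨rfl, rfl, by simpa using hs⟩
  obtain ⟨r, φ, hr, hphase⟩ := exists_pos_mul_cos_sub_eq h12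
  have hconst : ∀ᵐ s ∂μ, cos (θ s - φ) = -a₃ / r := by
    filter_upwards [hrel] with s hs
    rw [eq_div_iff hr.ne', mul_comm, ← hphase]
    linarith
  have hzero : -a₃ / r = 0 := by
    have h := integral_cos_sub hθ φ
    rw [integral_congr_ae hconst, integral_const, hcos, hsin, smul_eq_mul] at h
    simpa [measureReal_univ_pos.ne'] using h
  exact ⟨φ, by simpa [hzero] using hconst⟩

end Trigonometric

theorem exists_measurable_ae_eq_add_int_mul {θ : α → ℝ} (hθ : AEMeasurable θ μ) {b c : ℝ}
    (hc : c ≠ 0) (h : ∀ᵐ s ∂μ, ∃ n : ℤ, θ s = b + n * c) :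
    ∃ k : α → ℤ, Measurable k ∧ ∀ᵐ s ∂μ, θ s = b + k s * c := by
  refine ⟨fun s => ⌊(hθ.mk θ s - b) / c⌋,
    ((hθ.measurable_mk.sub_const b).div_const c).floor, ?_⟩
  filter_upwards [h, hθ.ae_eq_mk] with s ⟨n, hn⟩ hmk
  rw [← hmk, hn, add_sub_cancel_left, mul_div_cancel_right₀ _ hc, Int.floor_intCast]

theorem integral_neg_one_zpow [IsFiniteMeasure μ] {k : α → ℤ} (hk : Measurable k) :
    ∫ s, (-1 : ℝ) ^ k s ∂μ = μ.real {s | Even (k s)} - μ.real {s | Odd (k s)} := by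
  have hE : MeasurableSet {s | Even (k s)} := hk ((MeasurableSet.of_discrete (s := {n : ℤ | Even n})))
  have hO : MeasurableSet {s | Odd (k s)} := hk ((MeasurableSet.of_discrete (s := {n : ℤ | Odd n})))
  have hsign : (fun s => (-1 : ℝ) ^ k s) =
      fun s => {s | Even (k s)}.indicator 1 s - {s | Odd (k s)}.indicator 1 s := by
    ext s
    rcases Int.even_or_odd (k s) with h | h
    · simp [h, h.neg_one_zpow, Int.not_odd_iff_even.2 h]
    · simp [h, h.neg_one_zpow, Int.not_even_iff_odd.2 h]
  rw [hsign, integral_sub ((integrable_const 1).indicator hE) ((integrable_const 1).indicator hO),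
    integral_indicator_one hE, integral_indicator_one hO]

theorem measureReal_setOf_even_add_odd [IsFiniteMeasure μ] {k : α → ℤ} (hk : Measurable k) :
    μ.real {s | Even (k s)} + μ.real {s | Odd (k s)} = μ.real univ := by
  simp_rw [← Int.not_even_iff_odd]
  exact measureReal_add_measureReal_compl (hk ((MeasurableSet.of_discrete (s := {n : ℤ | Even n}))))

end MeasureTheory

instance : IsFiniteMeasure μArc := by
  unfold μArc; infer_instance

theorem μArc_real_univ : μArc.real univ = 2 * π := by
  simp [μArc, two_pi_pos.le]

instance : NeZero μArc :=
  ⟨fun h => two_pi_pos.ne' (by simpa [h] using μArc_real_univ)⟩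

theorem μArc_setOf (p : ℝ → Prop) : μArc {s | p s} = volume {s ∈ Icc 0 (2 * π) | p s} := by
  rw [μArc, Measure.restrict_apply' measurableSet_Icc, inter_comm]
  rfl

theorem stmt5 (θ : ℝ → ℝ)
    (hθ : MemLp θ 2 μArc)
    (hcos : (∫ s, Real.cos (θ s) ∂μArc) = 0)
    (hsin : (∫ s, Real.sin (θ s) ∂μArc) = 0)
    (a₁ a₂ a₃ : ℝ) (ha : ¬(a₁ = 0 ∧ a₂ = 0 ∧ a₃ = 0))
    (hrel : ∀ᵐ s ∂μArc, a₁ * Real.cos (θ s) + a₂ * Real.sin (θ s) + a₃ = 0) :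
    -- then `θ ∈ Z`:
    ∃ b : ℝ, ∃ k : ℝ → ℤ, Measurable k ∧
      (∀ᵐ s ∂μArc, θ s = b + (k s : ℝ) * Real.pi) ∧
      volume {s ∈ Set.Icc 0 (2 * Real.pi) | Even (k s)} = ENNReal.ofReal Real.pi ∧
      volume {s ∈ Set.Icc 0 (2 * Real.pi) | Odd (k s)} = ENNReal.ofReal Real.pi := by
  obtain ⟨φ, hφ⟩ := exists_ae_cos_sub_eq_zero hθ.1 hcos hsin ha hrel
  obtain ⟨k, hk, hθk⟩ := exists_measurable_ae_eq_add_int_mul hθ.1.aemeasurable pi_ne_zero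
    (b := φ + π / 2) <| by
      filter_upwards [hφ] with s hs
      obtain ⟨n, hn⟩ := cos_eq_zero_iff.1 hs
      exact ⟨n, by linarith⟩
  have hsign : ∀ᵐ s ∂μArc, sin (θ s - φ) = (-1) ^ k s := by
    filter_upwards [hθk] with s hs
    rw [hs, add_assoc, add_sub_cancel_left, sin_add_int_mul_pi, sin_pi_div_two, mul_one]
  have hbalance : μArc.real {s | Even (k s)} = μArc.real {s | Odd (k s)} := by
    have h := integral_sin_sub hθ.1 φ
    rw [hcos, hsin, integral_congr_ae hsign, integral_neg_one_zpow hk] at h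
    linarith
  have htotal := measureReal_setOf_even_add_odd (μ := μArc) hk
  rw [μArc_real_univ] at htotal
  refine ⟨φ + π / 2, k, hk, hθk, ?_, ?_⟩
  · rw [← μArc_setOf, ← ofReal_measureReal]
    congr 1
    linarith
  · rw [← μArc_setOf, ← ofReal_measureReal]
    congr 1
    linarith
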